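/- arXiv:2510.09814 — 3 statements merged into one kernel-verified Lean document; each statement's English description precedes it below -/
import Mathlib

section
/- For any matching μ of an assignment game, there exists a nonnegative price vector p : S → ℝ such that the allocation (μ, p) is individually rational and SI(μ, p) = OPT − SW(μ); equivalently, when OPT > 0, the stability index attains the optimality ratio: J(μ,p) = λ(μ). -/
open Finset

/-- A matching: a partial, injective assignment of buyers to sellers. -/
structure Matching (B S : Type*) where
  toFun : B → Option S
  inj : ∀ i i' j, toFun i = some j → toFun i' = some j → i = i'

variable {B S : Type*} [Fintype B] [Fintype S]

/-- Generated utility of a pair: `a i j = h i j - c j`. -/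
def gain (h : B → S → ℝ) (c : S → ℝ) (i : B) (j : S) : ℝ := h i j - c j

/-- Social welfare of a matching. -/
def SW (h : B → S → ℝ) (c : S → ℝ) (μ : Matching B S) : ℝ :=
  ∑ i : B, ((μ.toFun i).elim 0 (fun j => gain h c i j))

/-- Buyer utility under an allocation. -/
def buyerU (h : B → S → ℝ) (μ : Matching B S) (p : S → ℝ) (i : B) : ℝ :=
  (μ.toFun i).elim 0 (fun j => h i j - p j)

/-- Seller utility under an allocation. -/
def sellerU (c : S → ℝ) (p : S → ℝ) (j : S) : ℝ := p j - c j

/-- A seller is matched under `μ`. -/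
def SellerMatched (μ : Matching B S) (j : S) : Prop := ∃ i, μ.toFun i = some j

/-- A valid price vector: nonnegative, and equal to the seller's valuation on
unmatched sellers. -/
def ValidPrices (c : S → ℝ) (μ : Matching B S) (p : S → ℝ) : Prop :=
  (∀ j, 0 ≤ p j) ∧ (∀ j, ¬ SellerMatched μ j → p j = c j)

/-- Individual rationality of an allocation. -/
def IndivRational (h : B → S → ℝ) (c : S → ℝ) (μ : Matching B S) (p : S → ℝ) : Prop :=
  (∀ i, 0 ≤ buyerU h μ p i) ∧ (∀ j, 0 ≤ sellerU c p j)

/-- Stability of an allocation. -/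
def Stable (h : B → S → ℝ) (c : S → ℝ) (μ : Matching B S) (p : S → ℝ) : Prop :=
  IndivRational h c μ p ∧ ∀ i j, gain h c i j ≤ buyerU h μ p i + sellerU c p j

/-- The optimal (maximum) social welfare over all matchings. -/
noncomputable def OPT (h : B → S → ℝ) (c : S → ℝ) : ℝ :=
  sSup (Set.range (SW h c))

/-- `μ'` is a matching within the sub-market `(B', S')`. -/
def Within (B' : Finset B) (S' : Finset S) (μ' : Matching B S) : Prop :=
  ∀ i j, μ'.toFun i = some j → i ∈ B' ∧ j ∈ S'

/-- Subset instability of a pair of utility vectors `(u, v)`. -/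
noncomputable def SIgen (h : B → S → ℝ) (c : S → ℝ) (u : B → ℝ) (v : S → ℝ) : ℝ :=
  sSup {x | ∃ (B' : Finset B) (S' : Finset S) (μ' : Matching B S),
    Within B' S' μ' ∧ x = SW h c μ' - ((∑ i ∈ B', u i) + (∑ j ∈ S', v j))}

/-- Subset instability of an allocation. -/
noncomputable def SI (h : B → S → ℝ) (c : S → ℝ) (μ : Matching B S) (p : S → ℝ) : ℝ :=
  SIgen h c (buyerU h μ p) (sellerU c p)

/-!
The linear-programming dual of the assignment problem is the minimum weighted vertex cover: weights
`y ≥ 0` on the agents with `a i j ≤ y i + y j`. A cover of minimum total weight exists by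
compactness. Moving a small weight `ε` off a set `T` of agents onto its neighbourhood in the graph
of tight pairs (with a loop at every agent of weight zero) keeps it a cover, so minimality gives
Hall's condition for that graph. A perfect matching of it is a matching of tight pairs saturating
every agent of positive weight, so the minimum cover weighs at most `OPT` (Egerváry's theorem).

Given `μ`, let each matched buyer `i` keep `min (a i j) (y i)` of the gain and the seller the rest.
Then every agent's utility is at most its cover weight and the utilities add up to `SW μ`, so a
coalition can gain at most `∑ y - SW μ ≤ OPT - SW μ`; the grand coalition with an optimal matching
gains exactly `OPT - SW μ`.
-/

open Filter Topology

namespace Matching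

instance : Nonempty (Matching B S) := ⟨⟨fun _ => none, by simp⟩⟩

instance [Finite B] [Finite S] : Finite (Matching B S) :=
  Finite.of_injective Matching.toFun fun μ ν h => by cases μ; cases ν; congr

open scoped Classical in
theorem sum_elim_eq_sum_sellerMatched (μ : Matching B S) (f : S → ℝ) :
    ∑ i, (μ.toFun i).elim 0 f = ∑ j with SellerMatched μ j, f j := by
  calc ∑ i, (μ.toFun i).elim 0 f = ∑ i, ∑ j, if μ.toFun i = some j then f j else 0 := by
        refine sum_congr rfl fun i _ => ?_
        cases μ.toFun i <;> simp
    _ = ∑ j, ∑ i, if μ.toFun i = some j then f j else 0 := sum_comm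
    _ = ∑ j with SellerMatched μ j, f j := by
        rw [sum_filter]
        refine sum_congr rfl fun j _ => ?_
        by_cases hj : SellerMatched μ j
        · obtain ⟨i, hi⟩ := hj
          rw [if_pos ⟨i, hi⟩, Fintype.sum_eq_single i fun i' hne =>
            if_neg fun hi' => hne (μ.inj _ _ _ hi' hi), if_pos hi]
        · rw [if_neg hj]
          exact sum_eq_zero fun i _ => if_neg fun hi => hj ⟨i, hi⟩

end Matching

theorem SW_le_OPT (h : B → S → ℝ) (c : S → ℝ) (μ : Matching B S) : SW h c μ ≤ OPT h c :=
  le_csSup (Set.finite_range _).bddAbove ⟨μ, rfl⟩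

theorem exists_SW_eq_OPT (h : B → S → ℝ) (c : S → ℝ) : ∃ ν : Matching B S, SW h c ν = OPT h c :=
  (Set.range_nonempty _).csSup_mem (Set.finite_range _)

theorem eventually_nonneg_add_mul {r s : ℝ} (hr : 0 ≤ r) (hs : r = 0 → 0 ≤ s) :
    ∀ᶠ ε in 𝓝[>] 0, 0 ≤ r + ε * s := by
  rcases hr.eq_or_lt with rfl | hr
  · filter_upwards [self_mem_nhdsWithin] with ε hε
    simpa using mul_nonneg (le_of_lt hε) (hs rfl)
  · have : Tendsto (fun ε => r + ε * s) (𝓝 0) (𝓝 r) :=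
      (by fun_prop : Continuous fun ε : ℝ => r + ε * s).tendsto' 0 r (by simp)
    exact ((this.eventually (lt_mem_nhds hr)).mono fun _ h => h.le).filter_mono nhdsWithin_le_nhds

section WeightedCover

variable (a : B → S → ℝ)

def IsWeightedCover (y : B ⊕ S → ℝ) : Prop :=
  0 ≤ y ∧ ∀ i j, a i j ≤ y (.inl i) + y (.inr j)

variable {a}

omit [Fintype B] [Fintype S] in
theorem IsWeightedCover.nonneg {y : B ⊕ S → ℝ} (hy : IsWeightedCover a y) (x : B ⊕ S) :
    0 ≤ y x :=
  hy.1 x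

omit [Fintype B] [Fintype S] in
theorem isClosed_setOf_isWeightedCover : IsClosed {y : B ⊕ S → ℝ | IsWeightedCover a y} := by
  simp only [IsWeightedCover, Set.ofPred_and, Set.ofPred_forall]
  exact (isClosed_le continuous_const continuous_id).inter <| isClosed_iInter fun i =>
    isClosed_iInter fun j => isClosed_le continuous_const <| by fun_prop

omit [Fintype B] [Fintype S] in
theorem IsWeightedCover.inf_const {y : B ⊕ S → ℝ} (hy : IsWeightedCover a y) {C : ℝ}
    (hC0 : 0 ≤ C) (hC : ∀ i j, a i j ≤ C) : IsWeightedCover a (y ⊓ fun _ => C) := by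
  refine ⟨le_inf hy.1 fun _ => hC0, fun i j => ?_⟩
  simp only [Pi.inf_apply]
  have hi := hy.nonneg (.inl i)
  have hj := hy.nonneg (.inr j)
  rcases min_cases (y (.inl i)) C with ⟨h₁, -⟩ | ⟨h₁, -⟩ <;>
  rcases min_cases (y (.inr j)) C with ⟨h₂, -⟩ | ⟨h₂, -⟩ <;>
  rw [h₁, h₂] <;> linarith [hy.2 i j, hC i j]

theorem IsWeightedCover.sum_le_of_within {y : B ⊕ S → ℝ} (hy : IsWeightedCover a y)
    {B' : Finset B} {S' : Finset S} {μ : Matching B S} (hμ : Within B' S' μ) :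
    ∑ i, (μ.toFun i).elim 0 (a i) ≤ ∑ i ∈ B', y (.inl i) + ∑ j ∈ S', y (.inr j) := by
  classical
  calc ∑ i, (μ.toFun i).elim 0 (a i)
      ≤ ∑ i, ((μ.toFun i).elim 0 fun _ => y (.inl i)) +
          ∑ i, (μ.toFun i).elim 0 fun j => y (.inr j) := by
        rw [← sum_add_distrib]
        refine sum_le_sum fun i _ => ?_
        cases μ.toFun i <;> simp [hy.2]
    _ ≤ ∑ i ∈ B', y (.inl i) + ∑ j ∈ S', y (.inr j) := by
        gcongr
        · rw [← sum_subset (subset_univ B') fun i _ hi => ?_]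
          · exact sum_le_sum fun i _ => by cases μ.toFun i <;> simp [hy.nonneg]
          · cases hμi : μ.toFun i with
            | none => rfl
            | some j => exact absurd (hμ i j hμi).1 hi
        · rw [μ.sum_elim_eq_sum_sellerMatched]
          refine sum_le_sum_of_subset_of_nonneg ?_ fun j _ _ => hy.nonneg _
          rintro j hj
          obtain ⟨i, hi⟩ := (mem_filter.1 hj).2
          exact (hμ i j hi).2

variable (a) in
theorem exists_isWeightedCover_forall_sum_le :
    ∃ y, IsWeightedCover a y ∧ ∀ y', IsWeightedCover a y' → ∑ x, y x ≤ ∑ x, y' x := by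
  obtain ⟨M, hM⟩ := Finite.exists_le fun p : B × S => a p.1 p.2
  set C := max M 0
  have hC : ∀ i j, a i j ≤ C := fun i j => (hM (i, j)).trans (le_max_left _ _)
  have hC0 : 0 ≤ C := le_max_right _ _
  set K := {y | IsWeightedCover a y} ∩ Set.Icc 0 fun _ => C
  have hK : IsCompact K := isCompact_Icc.inter_left isClosed_setOf_isWeightedCover
  have hCK : (fun _ => C) ∈ K :=
    ⟨⟨fun _ => hC0, fun i j => (hC i j).trans (le_add_of_nonneg_right hC0)⟩, fun _ => hC0, le_rfl⟩
  have hsum : Continuous fun y : B ⊕ S → ℝ => ∑ x, y x := by fun_prop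
  obtain ⟨y, hyK, hmin⟩ := hK.exists_isMinOn ⟨_, hCK⟩ hsum.continuousOn
  refine ⟨y, hyK.1, fun y' hy' => ?_⟩
  have hy'C := hy'.inf_const hC0 hC
  calc ∑ x, y x ≤ ∑ x, (y' ⊓ fun _ => C) x := hmin ⟨hy'C, hy'C.1, inf_le_right⟩
    _ ≤ ∑ x, y' x := sum_le_sum fun x _ => inf_le_left

theorem IsWeightedCover.exists_pos_add_smul {y d : B ⊕ S → ℝ} (hy : IsWeightedCover a y)
    (hd₀ : ∀ x, y x = 0 → 0 ≤ d x)
    (hd : ∀ i j, y (.inl i) + y (.inr j) = a i j → 0 ≤ d (.inl i) + d (.inr j)) :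
    ∃ ε : ℝ, 0 < ε ∧ IsWeightedCover a (y + ε • d) := by
  have h₁ : ∀ᶠ ε in 𝓝[>] (0 : ℝ), ∀ x, 0 ≤ y x + ε * d x :=
    eventually_all.2 fun x => eventually_nonneg_add_mul (hy.nonneg x) (hd₀ x)
  have h₂ : ∀ᶠ ε in 𝓝[>] (0 : ℝ), ∀ i j,
      0 ≤ (y (.inl i) + y (.inr j) - a i j) + ε * (d (.inl i) + d (.inr j)) :=
    eventually_all.2 fun i => eventually_all.2 fun j =>
      eventually_nonneg_add_mul (sub_nonneg.2 (hy.2 i j)) fun h => hd i j (by linarith)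
  obtain ⟨ε, ⟨h₁, h₂⟩, hε⟩ := ((h₁.and h₂).and self_mem_nhdsWithin).exists
  refine ⟨ε, hε, fun x => by simpa using h₁ x, fun i j => ?_⟩
  simp only [Pi.add_apply, Pi.smul_apply, smul_eq_mul]
  linarith [h₂ i j]

variable (a) in
/-- The loop at an agent of weight zero lets a perfect matching of this graph leave that agent
unmatched. -/
def TightEdge (y : B ⊕ S → ℝ) : B ⊕ S → B ⊕ S → Prop
  | .inl i, .inl i' => i = i' ∧ y (.inl i) = 0
  | .inr j, .inr j' => j = j' ∧ y (.inr j) = 0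
  | .inl i, .inr j => y (.inl i) + y (.inr j) = a i j
  | .inr j, .inl i => y (.inl i) + y (.inr j) = a i j

omit [Fintype B] [Fintype S] in
theorem tightEdge_self {y : B ⊕ S → ℝ} {x : B ⊕ S} : TightEdge a y x x ↔ y x = 0 := by
  cases x <;> simp [TightEdge]

open scoped Classical in
theorem IsWeightedCover.card_le_card_tightEdge_image {y : B ⊕ S → ℝ} (hy : IsWeightedCover a y)
    (hmin : ∀ y', IsWeightedCover a y' → ∑ x, y x ≤ ∑ x, y' x) (T : Finset (B ⊕ S)) :
    #T ≤ #{x' | ∃ x ∈ T, TightEdge a y x x'} := by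
  set N : Finset (B ⊕ S) := {x' | ∃ x ∈ T, TightEdge a y x x'}
  have hN : ∀ x ∈ T, ∀ x', TightEdge a y x x' → x' ∈ N := fun x hx x' h =>
    mem_filter.2 ⟨mem_univ _, x, hx, h⟩
  -- `d` moves weight from `T` onto `N`; this keeps `y` a cover because `N` contains every tight
  -- partner of `T` and every agent of `T` of weight zero.
  set d : B ⊕ S → ℝ := fun x => (if x ∈ N then 1 else 0) - (if x ∈ T then 1 else 0)
  obtain ⟨ε, hε, hyε⟩ := hy.exists_pos_add_smul (d := d)
    (fun x h0 => by
      by_cases hx : x ∈ T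
      · simp [d, hx, hN x hx x (tightEdge_self.2 h0)]
      · simp only [d, hx, if_false, sub_zero]; split_ifs <;> norm_num)
    (fun i j hij => by
      have h₁ : .inl i ∈ T → .inr j ∈ N := fun h => hN _ h _ hij
      have h₂ : .inr j ∈ T → .inl i ∈ N := fun h => hN _ h _ hij
      simp only [d]
      split_ifs <;> first | tauto | norm_num)
  have hd : ∑ x, d x = #N - #T := by simp [d, sum_sub_distrib]
  have hle := hmin _ hyε
  simp only [Pi.add_apply, Pi.smul_apply, smul_eq_mul, sum_add_distrib, ← mul_sum, hd] at hle
  have : (#T : ℝ) ≤ #N := by nlinarith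
  exact_mod_cast this

theorem exists_matching_sum_eq_of_tightEdge {y : B ⊕ S → ℝ} {σ : B ⊕ S → B ⊕ S}
    (hσ : Function.Injective σ) (hσy : ∀ x, TightEdge a y x (σ x)) :
    ∃ μ : Matching B S, ∑ i, (μ.toFun i).elim 0 (a i) = ∑ x, y x := by
  classical
  let μ : Matching B S := ⟨fun i => (σ (.inl i)).getRight?, fun i i' j hi hi' => by
    rw [Sum.getRight?_eq_some_iff] at hi hi'
    exact Sum.inl_injective (hσ (hi.trans hi'.symm))⟩
  have hμ : ∀ i j, μ.toFun i = some j ↔ σ (.inl i) = .inr j := fun i j =>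
    Sum.getRight?_eq_some_iff
  have hbuyer : ∀ i, y (.inl i) = (μ.toFun i).elim 0 fun _ => y (.inl i) := fun i => by
    have := hσy (.inl i)
    cases hi : σ (.inl i) with
    | inl i' => rw [hi] at this; obtain ⟨rfl, h0⟩ := this; simp [μ, hi, h0]
    | inr j => simp [μ, hi]
  have hseller : ∀ j, ¬ SellerMatched μ j → y (.inr j) = 0 := fun j hj => by
    obtain ⟨x, hx⟩ := Finite.surjective_of_injective hσ (.inr j)
    have := hσy x
    cases x with
    | inl i => exact absurd ⟨i, (hμ i j).2 hx⟩ hj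
    | inr j' => rw [hx] at this; obtain ⟨rfl, h0⟩ := this; exact h0
  have htight : ∀ i j, μ.toFun i = some j → y (.inl i) + y (.inr j) = a i j := fun i j hij => by
    simpa [(hμ i j).1 hij, TightEdge] using hσy (.inl i)
  refine ⟨μ, ?_⟩
  calc ∑ i, (μ.toFun i).elim 0 (a i)
      = ∑ i, ((μ.toFun i).elim 0 fun _ => y (.inl i)) +
          ∑ i, (μ.toFun i).elim 0 fun j => y (.inr j) := by
        rw [← sum_add_distrib]
        refine sum_congr rfl fun i _ => ?_
        cases hi : μ.toFun i <;> simp [hi, htight i]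
    _ = ∑ i, y (.inl i) + ∑ j, y (.inr j) := by
        rw [μ.sum_elim_eq_sum_sellerMatched,
          sum_filter_of_ne fun j _ h => by_contra fun hj => h (hseller j hj)]
        simp only [← hbuyer]
    _ = ∑ x, y x := (Fintype.sum_sum_type y).symm

end WeightedCover

theorem exists_isWeightedCover_sum_le_OPT (h : B → S → ℝ) (c : S → ℝ) :
    ∃ y, IsWeightedCover (gain h c) y ∧ ∑ x, y x ≤ OPT h c := by
  classical
  obtain ⟨y, hy, hmin⟩ := exists_isWeightedCover_forall_sum_le (gain h c)
  obtain ⟨σ, hσ, hσy⟩ := (Fintype.all_card_le_filter_rel_iff_exists_injective _).1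
    (hy.card_le_card_tightEdge_image hmin)
  obtain ⟨μ, hμ⟩ := exists_matching_sum_eq_of_tightEdge hσ hσy
  exact ⟨y, hy, hμ ▸ SW_le_OPT h c μ⟩

theorem sum_buyerU_add_sum_sellerU {h : B → S → ℝ} {c p : S → ℝ} {μ : Matching B S}
    (hp : ∀ j, ¬ SellerMatched μ j → p j = c j) :
    ∑ i, buyerU h μ p i + ∑ j, sellerU c p j = SW h c μ := by
  classical
  rw [← sum_filter_of_ne (p := SellerMatched μ) fun j _ h =>
      by_contra fun hj => h (by simp [sellerU, hp j hj]),
    ← μ.sum_elim_eq_sum_sellerMatched, SW, ← sum_add_distrib]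
  refine sum_congr rfl fun i _ => ?_
  cases hi : μ.toFun i <;> simp [hi, buyerU, sellerU, gain]

theorem SIgen_eq_OPT_sub {h : B → S → ℝ} {c : S → ℝ} {y : B ⊕ S → ℝ}
    (hy : IsWeightedCover (gain h c) y) (hyOPT : ∑ x, y x ≤ OPT h c) {U : B → ℝ} {V : S → ℝ}
    (hU : ∀ i, U i ≤ y (.inl i)) (hV : ∀ j, V j ≤ y (.inr j)) :
    SIgen h c U V = OPT h c - (∑ i, U i + ∑ j, V j) := by
  refine IsGreatest.csSup_eq ⟨?_, ?_⟩
  · obtain ⟨ν, hν⟩ := exists_SW_eq_OPT h c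
    exact ⟨univ, univ, ν, fun _ _ _ => ⟨mem_univ _, mem_univ _⟩, by rw [hν]⟩
  · rintro _ ⟨B', S', μ', hμ', rfl⟩
    have hSW : SW h c μ' ≤ ∑ i ∈ B', y (.inl i) + ∑ j ∈ S', y (.inr j) :=
      hy.sum_le_of_within hμ'
    have hB : ∑ i ∈ B', (y (.inl i) - U i) ≤ ∑ i, (y (.inl i) - U i) :=
      sum_le_sum_of_subset_of_nonneg (subset_univ _) fun i _ _ => sub_nonneg.2 (hU i)
    have hS : ∑ j ∈ S', (y (.inr j) - V j) ≤ ∑ j, (y (.inr j) - V j) :=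
      sum_le_sum_of_subset_of_nonneg (subset_univ _) fun j _ _ => sub_nonneg.2 (hV j)
    rw [Fintype.sum_sum_type] at hyOPT
    simp only [sum_sub_distrib] at hB hS
    linarith

open scoped Classical in
noncomputable def coverPrices (h : B → S → ℝ) (c : S → ℝ) (μ : Matching B S) (u : B → ℝ)
    (j : S) : ℝ :=
  if hj : SellerMatched μ j then h hj.choose j - min (gain h c hj.choose j) (u hj.choose) else c j

section coverPrices

variable {h : B → S → ℝ} {c : S → ℝ} {μ : Matching B S} {u : B → ℝ} {i : B} {j : S}

omit [Fintype B] [Fintype S] in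
theorem coverPrices_of_toFun_eq (hij : μ.toFun i = some j) :
    coverPrices h c μ u j = h i j - min (gain h c i j) (u i) := by
  have hj : SellerMatched μ j := ⟨i, hij⟩
  rw [coverPrices, dif_pos hj, μ.inj _ _ _ hj.choose_spec hij]

omit [Fintype B] [Fintype S] in
theorem coverPrices_of_not_sellerMatched (hj : ¬ SellerMatched μ j) :
    coverPrices h c μ u j = c j := by
  rw [coverPrices, dif_neg hj]

omit [Fintype B] [Fintype S] in
theorem buyerU_coverPrices (hij : μ.toFun i = some j) :
    buyerU h μ (coverPrices h c μ u) i = min (gain h c i j) (u i) := by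
  simp [buyerU, hij, coverPrices_of_toFun_eq hij]

omit [Fintype B] [Fintype S] in
theorem sellerU_coverPrices (hij : μ.toFun i = some j) :
    sellerU c (coverPrices h c μ u) j = gain h c i j - min (gain h c i j) (u i) := by
  rw [sellerU, coverPrices_of_toFun_eq hij, gain]
  ring

omit [Fintype B] [Fintype S] in
theorem sellerU_coverPrices_nonneg : 0 ≤ sellerU c (coverPrices h c μ u) j := by
  by_cases hj : SellerMatched μ j
  · obtain ⟨i, hij⟩ := hj
    rw [sellerU_coverPrices hij]
    exact sub_nonneg.2 (min_le_left _ _)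
  · simp [sellerU, coverPrices_of_not_sellerMatched hj]

omit [Fintype B] [Fintype S] in
theorem validPrices_coverPrices (hc : ∀ j, 0 ≤ c j) : ValidPrices c μ (coverPrices h c μ u) := by
  refine ⟨fun j => ?_, fun _ => coverPrices_of_not_sellerMatched⟩
  have := sellerU_coverPrices_nonneg (h := h) (c := c) (μ := μ) (u := u) (j := j)
  rw [sellerU] at this
  linarith [hc j]

omit [Fintype B] [Fintype S] in
theorem indivRational_coverPrices (ha : ∀ i j, 0 ≤ gain h c i j) (hu : ∀ i, 0 ≤ u i) :
    IndivRational h c μ (coverPrices h c μ u) := by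
  refine ⟨fun i => ?_, fun _ => sellerU_coverPrices_nonneg⟩
  cases hij : μ.toFun i with
  | none => simp [buyerU, hij]
  | some j => rw [buyerU_coverPrices hij]; exact le_min (ha i j) (hu i)

variable {y : B ⊕ S → ℝ}

omit [Fintype B] [Fintype S] in
theorem IsWeightedCover.buyerU_coverPrices_le (hy : IsWeightedCover (gain h c) y) (i : B) :
    buyerU h μ (coverPrices h c μ fun i => y (.inl i)) i ≤ y (.inl i) := by
  cases hij : μ.toFun i with
  | none => simpa [buyerU, hij] using hy.nonneg (.inl i)
  | some j => rw [buyerU_coverPrices hij]; exact min_le_right _ _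

omit [Fintype B] [Fintype S] in
theorem IsWeightedCover.sellerU_coverPrices_le (hy : IsWeightedCover (gain h c) y) (j : S) :
    sellerU c (coverPrices h c μ fun i => y (.inl i)) j ≤ y (.inr j) := by
  by_cases hj : SellerMatched μ j
  · obtain ⟨i, hij⟩ := hj
    rw [sellerU_coverPrices hij]
    have := hy.2 i j
    have := hy.nonneg (.inr j)
    rcases min_cases (gain h c i j) (y (.inl i)) with ⟨hmin, -⟩ | ⟨hmin, -⟩ <;> rw [hmin] <;>
      linarith
  · simp [sellerU, coverPrices_of_not_sellerMatched hj, hy.nonneg]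

end coverPrices

theorem exists_prices_SI_eq_opt_gap_general
    {B S : Type*} [Fintype B] [Fintype S]
    (h : B → S → ℝ) (c : S → ℝ)
    (hc : ∀ j, 0 ≤ c j)
    (ha : ∀ i j, 0 ≤ gain h c i j)
    (μ : Matching B S) :
    ∃ p : S → ℝ, ValidPrices c μ p ∧ IndivRational h c μ p ∧
      SI h c μ p = OPT h c - SW h c μ ∧
      (0 < OPT h c → 1 - SI h c μ p / OPT h c = SW h c μ / OPT h c) := by
  obtain ⟨y, hy, hyOPT⟩ := exists_isWeightedCover_sum_le_OPT h c
  set p := coverPrices h c μ fun i => y (.inl i)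
  have hvalid : ValidPrices c μ p := validPrices_coverPrices hc
  have hSI : SI h c μ p = OPT h c - SW h c μ := by
    rw [SI, SIgen_eq_OPT_sub hy hyOPT hy.buyerU_coverPrices_le hy.sellerU_coverPrices_le,
      sum_buyerU_add_sum_sellerU hvalid.2]
  refine ⟨p, hvalid, indivRational_coverPrices ha fun i => hy.nonneg _, hSI, fun hOPT => ?_⟩
  rw [hSI]
  field_simp
  ring

/-- For any matching there are prices making the allocation individually rational
with subset instability exactly the optimality gap; equivalently, the stability
index attains the optimality ratio. -/
theorem exists_prices_SI_eq_opt_gap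
    {B S : Type*} [Fintype B] [Fintype S]
    (h : B → S → ℝ) (c : S → ℝ)
    (hh : ∀ i j, 0 ≤ h i j) (hc : ∀ j, 0 ≤ c j)
    (ha : ∀ i j, 0 ≤ gain h c i j)
    (μ : Matching B S) :
    ∃ p : S → ℝ, ValidPrices c μ p ∧ IndivRational h c μ p ∧
      SI h c μ p = OPT h c - SW h c μ ∧
      (0 < OPT h c → 1 - SI h c μ p / OPT h c = SW h c μ / OPT h c) :=
  exists_prices_SI_eq_opt_gap_general h c hc ha μ
end

section
/- Let (μ, p) be an individually rational allocation of an assignment game in which a(i,j) > 0 for every pair (i,j) ∈ B × S, and set κ(μ,p) := min over (i,j) ∈ B × S of (u_i(μ,p) + v_j(μ,p))/a(i,j). Then κ(μ,p) equals the minimum, over all subsets B' ⊆ B, S' ⊆ S and all nonempty matchings μ' between B' and S' (matchings with at least one matched pair), of the ratio (Σ_{i∈B'} u_i(μ,p) + Σ_{j∈S'} v_j(μ,p)) / SW(μ'). In particular, (μ, p) belongs to the κ(μ,p)-approximate core. -/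
/-!
If `u i + v j ≥ κ * a i j` for every pair, summing this over the pairs of a matching `μ'` inside
a coalition `(B', S')` gives `∑_{B'} u + ∑_{S'} v ≥ κ * SW μ'`: each member of the coalition is
counted at most once because `μ'` is injective, and the unmatched members only add nonnegative
utility by individual rationality. Conversely, a pair `(i, j)` minimising `(u i + v j) / a i j`,
viewed as a one-pair matching of the coalition `({i}, {j})`, attains the bound.
-/

open Finset

variable {B S : Type*} [Fintype B] [Fintype S]

/-- Membership in the κ-approximate core. -/
def ApproxCore (h : B → S → ℝ) (c : S → ℝ) (μ : Matching B S) (p : S → ℝ) (κ : ℝ) : Prop :=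
  (∀ i, 0 ≤ buyerU h μ p i) ∧ (∀ j, 0 ≤ sellerU c p j) ∧
  ∀ i j, κ * gain h c i j ≤ buyerU h μ p i + sellerU c p j


namespace Matching

def single {B S : Type*} [DecidableEq B] (i₀ : B) (j₀ : S) : Matching B S where
  toFun i := if i = i₀ then some j₀ else none
  inj i i' j hi hi' := by
    split_ifs at hi hi'
    simp_all

theorem within_single {B S : Type*} [DecidableEq B] (i₀ : B) (j₀ : S) :
    Within {i₀} {j₀} (single i₀ j₀) := by
  intro i j hij
  simp only [single] at hij
  split_ifs at hij
  simp_all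

theorem SW_single {B S : Type*} [Fintype B] [DecidableEq B] (h : B → S → ℝ) (c : S → ℝ)
    (i₀ : B) (j₀ : S) :
    SW h c (single i₀ j₀) = gain h c i₀ j₀ := by
  rw [SW, sum_eq_single i₀ (fun i _ hi => by simp [single, hi]) (by simp)]
  simp [single]

def pairs [DecidableEq S] (μ : Matching B S) : Finset (B × S) :=
  univ.filter fun ij => μ.toFun ij.1 = some ij.2

variable [DecidableEq S] (μ : Matching B S)

@[simp]
theorem mem_pairs {ij : B × S} : ij ∈ μ.pairs ↔ μ.toFun ij.1 = some ij.2 := by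
  simp [pairs]

theorem sum_elim_eq_sum_pairs (f : B → S → ℝ) :
    ∑ i, (μ.toFun i).elim 0 (f i) = ∑ ij ∈ μ.pairs, f ij.1 ij.2 := by
  rw [pairs, sum_filter, Fintype.sum_prod_type]
  refine sum_congr rfl fun i _ => ?_
  rcases hi : μ.toFun i with _ | j <;> simp [hi]

theorem SW_eq_sum_pairs (h : B → S → ℝ) (c : S → ℝ) :
    SW h c μ = ∑ ij ∈ μ.pairs, gain h c ij.1 ij.2 :=
  μ.sum_elim_eq_sum_pairs (gain h c)

theorem injOn_fst_pairs : Set.InjOn Prod.fst (μ.pairs : Set (B × S)) := by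
  rintro ⟨i, j⟩ hij ⟨i', j'⟩ hij' rfl
  rw [mem_coe, mem_pairs] at hij hij'
  simp_all

theorem injOn_snd_pairs : Set.InjOn Prod.snd (μ.pairs : Set (B × S)) := by
  rintro ⟨i, j⟩ hij ⟨i', j'⟩ hij' rfl
  rw [mem_coe, mem_pairs] at hij hij'
  simp [μ.inj i i' j hij hij']

theorem sum_pairs_le_of_within {B' : Finset B} {S' : Finset S} (hW : Within B' S' μ)
    {u : B → ℝ} {v : S → ℝ} (hu : ∀ i, 0 ≤ u i) (hv : ∀ j, 0 ≤ v j) :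
    ∑ ij ∈ μ.pairs, (u ij.1 + v ij.2) ≤ ∑ i ∈ B', u i + ∑ j ∈ S', v j := by
  classical
  rw [sum_add_distrib, ← sum_image (g := Prod.fst) μ.injOn_fst_pairs,
    ← sum_image (g := Prod.snd) μ.injOn_snd_pairs]
  exact add_le_add
    (sum_le_sum_of_subset_of_nonneg
      (image_subset_iff.2 fun ij hij => (hW _ _ (μ.mem_pairs.1 hij)).1) fun i _ _ => hu i)
    (sum_le_sum_of_subset_of_nonneg
      (image_subset_iff.2 fun ij hij => (hW _ _ (μ.mem_pairs.1 hij)).2) fun j _ _ => hv j)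

theorem SW_pos {h : B → S → ℝ} {c : S → ℝ} (hgain : ∀ i j, 0 < gain h c i j)
    (hμ : ∃ i j, μ.toFun i = some j) : 0 < SW h c μ := by
  obtain ⟨i, j, hij⟩ := hμ
  rw [μ.SW_eq_sum_pairs]
  exact sum_pos (fun ij _ => hgain _ _) ⟨(i, j), μ.mem_pairs.2 hij⟩

end Matching

theorem le_div_SW_of_mul_gain_le {h : B → S → ℝ} {c : S → ℝ} (hgain : ∀ i j, 0 < gain h c i j)
    {u : B → ℝ} {v : S → ℝ} (hu : ∀ i, 0 ≤ u i) (hv : ∀ j, 0 ≤ v j) {κ : ℝ}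
    (hκ : ∀ i j, κ * gain h c i j ≤ u i + v j) {B' : Finset B} {S' : Finset S}
    {μ : Matching B S} (hW : Within B' S' μ) (hμ : ∃ i j, μ.toFun i = some j) :
    κ ≤ (∑ i ∈ B', u i + ∑ j ∈ S', v j) / SW h c μ := by
  classical
  rw [le_div_iff₀ (μ.SW_pos hgain hμ)]
  calc κ * SW h c μ = ∑ ij ∈ μ.pairs, κ * gain h c ij.1 ij.2 := by
        rw [μ.SW_eq_sum_pairs, mul_sum]
    _ ≤ ∑ ij ∈ μ.pairs, (u ij.1 + v ij.2) := sum_le_sum fun ij _ => hκ ij.1 ij.2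
    _ ≤ ∑ i ∈ B', u i + ∑ j ∈ S', v j := μ.sum_pairs_le_of_within hW hu hv

theorem kappa_characterization_general
    {B S : Type*} [Fintype B] [Fintype S] [Nonempty B] [Nonempty S]
    (h : B → S → ℝ) (c : S → ℝ)
    (ha : ∀ i j, 0 < gain h c i j)
    (μ : Matching B S) (p : S → ℝ)
    (hIR : IndivRational h c μ p) :
    (Finset.univ.inf' Finset.univ_nonempty
        (fun ij : B × S => (buyerU h μ p ij.1 + sellerU c p ij.2) / gain h c ij.1 ij.2))
      = sInf {x | ∃ (B' : Finset B) (S' : Finset S) (μ' : Matching B S),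
          Within B' S' μ' ∧ (∃ i j, μ'.toFun i = some j) ∧
          x = ((∑ i ∈ B', buyerU h μ p i) + (∑ j ∈ S', sellerU c p j)) / SW h c μ'} ∧
    ApproxCore h c μ p
      (Finset.univ.inf' Finset.univ_nonempty
        (fun ij : B × S => (buyerU h μ p ij.1 + sellerU c p ij.2) / gain h c ij.1 ij.2)) := by
  classical
  obtain ⟨hu, hv⟩ := hIR
  obtain ⟨⟨i₀, j₀⟩, -, hmin⟩ := exists_mem_eq_inf' univ_nonempty
    (fun ij : B × S => (buyerU h μ p ij.1 + sellerU c p ij.2) / gain h c ij.1 ij.2)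
  set κ := univ.inf' univ_nonempty
    (fun ij : B × S => (buyerU h μ p ij.1 + sellerU c p ij.2) / gain h c ij.1 ij.2)
  have hκ : ∀ i j, κ * gain h c i j ≤ buyerU h μ p i + sellerU c p j := fun i j =>
    (le_div_iff₀ (ha i j)).1 (inf'_le _ (mem_univ (i, j)))
  have hleast : IsLeast {x | ∃ (B' : Finset B) (S' : Finset S) (μ' : Matching B S),
      Within B' S' μ' ∧ (∃ i j, μ'.toFun i = some j) ∧
      x = ((∑ i ∈ B', buyerU h μ p i) + (∑ j ∈ S', sellerU c p j)) / SW h c μ'} κ := by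
    refine ⟨⟨{i₀}, {j₀}, .single i₀ j₀, Matching.within_single i₀ j₀,
      ⟨i₀, j₀, by simp [Matching.single]⟩, by rw [hmin, Matching.SW_single]; simp⟩, ?_⟩
    rintro x ⟨B', S', μ', hW, hμ', rfl⟩
    exact le_div_SW_of_mul_gain_le ha hu hv hκ hW hμ'
  exact ⟨hleast.csInf_eq.symm, hu, hv, hκ⟩

/-- For an individually rational allocation of a game with strictly positive
generated utilities, the worst pairwise ratio `(u_i + v_j) / a i j` equals the
worst ratio of coalition welfare to achievable welfare over all nonempty
sub-market matchings, and the allocation lies in the corresponding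
approximate core. -/
theorem kappa_characterization
    {B S : Type*} [Fintype B] [Fintype S] [Nonempty B] [Nonempty S]
    (h : B → S → ℝ) (c : S → ℝ)
    (hh : ∀ i j, 0 ≤ h i j) (hc : ∀ j, 0 ≤ c j)
    (ha : ∀ i j, 0 < gain h c i j)
    (μ : Matching B S) (p : S → ℝ) (hp : ValidPrices c μ p)
    (hIR : IndivRational h c μ p) :
    (Finset.univ.inf' Finset.univ_nonempty
        (fun ij : B × S => (buyerU h μ p ij.1 + sellerU c p ij.2) / gain h c ij.1 ij.2))
      = sInf {x | ∃ (B' : Finset B) (S' : Finset S) (μ' : Matching B S),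
          Within B' S' μ' ∧ (∃ i j, μ'.toFun i = some j) ∧
          x = ((∑ i ∈ B', buyerU h μ p i) + (∑ j ∈ S', sellerU c p j)) / SW h c μ'} ∧
    ApproxCore h c μ p
      (Finset.univ.inf' Finset.univ_nonempty
        (fun ij : B × S => (buyerU h μ p ij.1 + sellerU c p ij.2) / gain h c ij.1 ij.2)) :=
  kappa_characterization_general h c ha μ p hIR
end

section
/- Let Γ₁ be the assignment game with buyers {A, Bob}, a single seller D, h ≡ 1 and c ≡ 0 (so every generated utility equals 1), and let Γ₂ be the assignment game with a single buyer A, sellers {D, E}, h ≡ 1 and c ≡ 0. Fix any price q ∈ [0, 1] and consider: in Γ₁ the allocation (μ₁, p₁) that matches only A with D at price q, and in Γ₂ the allocation (μ₂, p₂) that matches only A with D at price q (with E priced at its valuation 0). Then in both games the underlying matching has optimality ratio 1, but max(SI_{Γ₁}(μ₁, p₁), SI_{Γ₂}(μ₂, p₂)) ≥ 1/2; equivalently, min(J_{Γ₁}(μ₁, p₁), J_{Γ₂}(μ₂, p₂)) ≤ 1/2 = (1/2)·λ. -/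
open Finset

variable {B S : Type*} [Fintype B] [Fintype S]

def Matching.single_s14 [DecidableEq B] (i : B) (j : S) : Matching B S where
  toFun i' := if i' = i then some j else none
  inj i₁ i₂ j' h₁ h₂ := by
    simp only [Option.ite_none_right_eq_some] at h₁ h₂
    exact h₁.1.trans h₂.1.symm

omit [Fintype B] [Fintype S] in
theorem Matching.within_single_s14 [DecidableEq B] (i : B) (j : S) :
    Within {i} {j} (Matching.single_s14 i j) := by
  intro i' j' h
  simp only [Matching.single_s14, Option.ite_none_right_eq_some, Option.some.injEq] at h
  simp [h.1, h.2]

omit [Fintype S] in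
theorem SW_single [DecidableEq B] (h : B → S → ℝ) (c : S → ℝ) (i : B) (j : S) :
    SW h c (Matching.single_s14 i j) = gain h c i j := by
  rw [SW, Finset.sum_eq_single i (fun i' _ hi' => by simp [Matching.single_s14, hi']) (by simp)]
  simp [Matching.single_s14]

omit [Fintype S] in
theorem SW_le_card_buyers (h : B → S → ℝ) (c : S → ℝ) (hg : ∀ i j, gain h c i j ≤ 1)
    (μ : Matching B S) : SW h c μ ≤ Fintype.card B := by
  rw [Fintype.card_eq_sum_ones, Nat.cast_sum]
  refine Finset.sum_le_sum fun i _ => ?_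
  cases μ.toFun i <;> simp [hg]

theorem SW_le_card_sellers (h : B → S → ℝ) (c : S → ℝ) (hg : ∀ i j, gain h c i j ≤ 1)
    (μ : Matching B S) : SW h c μ ≤ Fintype.card S := by
  set matched := Finset.univ.filter fun i => (μ.toFun i).isSome
  have hSW : SW h c μ ≤ matched.card := by
    rw [← Finset.sum_boole]
    refine Finset.sum_le_sum fun i _ => ?_
    cases μ.toFun i <;> simp [hg]
  have hcard : matched.card ≤ Fintype.card S := by
    calc matched.card ≤ (Finset.univ.map Function.Embedding.some).card :=
          Finset.card_le_card_of_injOn μ.toFun (fun i hi => ?_) (fun i₁ hi₁ i₂ _ he => ?_)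
      _ = Fintype.card S := by simp
    · obtain ⟨j, hj⟩ := Option.isSome_iff_exists.mp (Finset.mem_filter.mp hi).2
      simp [hj]
    · obtain ⟨j, hj⟩ := Option.isSome_iff_exists.mp (Finset.mem_filter.mp hi₁).2
      exact μ.inj i₁ i₂ j hj (he ▸ hj)
  exact hSW.trans (by exact_mod_cast hcard)

omit [Fintype S] in
theorem OPT_eq_of_forall_SW_le (h : B → S → ℝ) (c : S → ℝ) (μ₀ : Matching B S)
    (hμ₀ : ∀ μ, SW h c μ ≤ SW h c μ₀) : OPT h c = SW h c μ₀ :=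
  IsGreatest.csSup_eq ⟨⟨μ₀, rfl⟩, by rintro _ ⟨μ, rfl⟩; exact hμ₀ μ⟩

theorem neg_sum_le_sum_abs {α : Type*} [Fintype α] (s : Finset α) (u : α → ℝ) :
    -∑ i ∈ s, u i ≤ ∑ i, |u i| :=
  calc -∑ i ∈ s, u i ≤ |∑ i ∈ s, u i| := neg_le_abs _
    _ ≤ ∑ i ∈ s, |u i| := Finset.abs_sum_le_sum_abs _ _
    _ ≤ ∑ i, |u i| := Finset.sum_le_univ_sum_of_nonneg fun _ => abs_nonneg _

theorem SW_le_sum_abs_gain (h : B → S → ℝ) (c : S → ℝ) (μ : Matching B S) :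
    SW h c μ ≤ ∑ i, ∑ j, |gain h c i j| := by
  refine Finset.sum_le_sum fun i _ => ?_
  cases μ.toFun i with
  | none => exact Finset.sum_nonneg fun _ _ => abs_nonneg _
  | some j =>
    exact (le_abs_self _).trans <| Finset.single_le_sum (f := fun j => |gain h c i j|)
      (fun _ _ => abs_nonneg _) (Finset.mem_univ j)

theorem le_SIgen (h : B → S → ℝ) (c : S → ℝ) (u : B → ℝ) (v : S → ℝ) {B' : Finset B}
    {S' : Finset S} {μ' : Matching B S} (hμ' : Within B' S' μ') :
    SW h c μ' - ((∑ i ∈ B', u i) + (∑ j ∈ S', v j)) ≤ SIgen h c u v := by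
  refine le_csSup ⟨∑ i, ∑ j, |gain h c i j| + ∑ i, |u i| + ∑ j, |v j|, ?_⟩ ⟨B', S', μ', hμ', rfl⟩
  rintro _ ⟨B'', S'', μ'', -, rfl⟩
  linarith [SW_le_sum_abs_gain h c μ'', neg_sum_le_sum_abs B'' u, neg_sum_le_sum_abs S'' v]

theorem gain_sub_le_SI [DecidableEq B] (h : B → S → ℝ) (c : S → ℝ) (μ : Matching B S)
    (p : S → ℝ) (i : B) (j : S) :
    gain h c i j - (buyerU h μ p i + sellerU c p j) ≤ SI h c μ p := by
  simpa [SI, SW_single] using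
    le_SIgen h c (buyerU h μ p) (sellerU c p) (Matching.within_single_s14 i j)

theorem edge_arrival_half_tightness_general
    (q : ℝ)
    (h₁ : Fin 2 → Fin 1 → ℝ) (c₁ : Fin 1 → ℝ)
    (hh₁ : ∀ i j, h₁ i j = 1) (hc₁ : ∀ j, c₁ j = 0)
    (h₂ : Fin 1 → Fin 2 → ℝ) (c₂ : Fin 2 → ℝ)
    (hh₂ : ∀ i j, h₂ i j = 1) (hc₂ : ∀ j, c₂ j = 0)
    (μ₁ : Matching (Fin 2) (Fin 1))
    (hμ₁ : μ₁.toFun = fun i => if i = 0 then some 0 else none)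
    (p₁ : Fin 1 → ℝ) (hp₁ : p₁ = fun _ => q)
    (μ₂ : Matching (Fin 1) (Fin 2))
    (hμ₂ : μ₂.toFun = fun _ => some 0)
    (p₂ : Fin 2 → ℝ) (hp₂ : p₂ = fun j => if j = 0 then q else 0) :
    SW h₁ c₁ μ₁ = OPT h₁ c₁ ∧ SW h₂ c₂ μ₂ = OPT h₂ c₂ ∧
    (1 : ℝ) / 2 ≤ max (SI h₁ c₁ μ₁ p₁) (SI h₂ c₂ μ₂ p₂) ∧
    min (1 - SI h₁ c₁ μ₁ p₁ / OPT h₁ c₁) (1 - SI h₂ c₂ μ₂ p₂ / OPT h₂ c₂)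
      ≤ (1 : ℝ) / 2 := by
  have hg₁ : ∀ i j, gain h₁ c₁ i j = 1 := fun i j => by simp [gain, hh₁, hc₁]
  have hg₂ : ∀ i j, gain h₂ c₂ i j = 1 := fun i j => by simp [gain, hh₂, hc₂]
  have hSW₁ : SW h₁ c₁ μ₁ = 1 := by simp [SW, hμ₁, hg₁]
  have hSW₂ : SW h₂ c₂ μ₂ = 1 := by simp [SW, hμ₂, hg₂]
  have hOPT₁ : OPT h₁ c₁ = 1 := hSW₁ ▸ OPT_eq_of_forall_SW_le h₁ c₁ μ₁ fun μ => by
    simpa [hSW₁] using SW_le_card_sellers h₁ c₁ (fun i j => (hg₁ i j).le) μ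
  have hOPT₂ : OPT h₂ c₂ = 1 := hSW₂ ▸ OPT_eq_of_forall_SW_le h₂ c₂ μ₂ fun μ => by
    simpa [hSW₂] using SW_le_card_buyers h₂ c₂ (fun i j => (hg₂ i j).le) μ
  -- Blocking pairs: Bob (buyer 1) with D in Γ₁, A with E (seller 1) in Γ₂.
  have hSI₁ : 1 - q ≤ SI h₁ c₁ μ₁ p₁ := by
    simpa [hg₁, buyerU, hμ₁, sellerU, hc₁, hp₁] using gain_sub_le_SI h₁ c₁ μ₁ p₁ 1 0
  have hSI₂ : q ≤ SI h₂ c₂ μ₂ p₂ := by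
    simpa [hg₂, buyerU, hμ₂, hh₂, sellerU, hc₂, hp₂] using gain_sub_le_SI h₂ c₂ μ₂ p₂ 0 1
  have hmax : (1 : ℝ) / 2 ≤ max (SI h₁ c₁ μ₁ p₁) (SI h₂ c₂ μ₂ p₂) := by
    rcases le_total q (1 / 2) with hq | hq
    · exact le_max_of_le_left (by linarith)
    · exact le_max_of_le_right (by linarith)
  refine ⟨hSW₁.trans hOPT₁.symm, hSW₂.trans hOPT₂.symm, hmax, ?_⟩
  rw [hOPT₁, hOPT₂, div_one, div_one, min_sub_sub_left]
  linarith

/-- Tightness of the 1/2 stability guarantee: in the two one-unit-valuation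
games Γ₁ (buyers A, Bob; seller D) and Γ₂ (buyer A; sellers D, E), matching
only A with D at any price q ∈ [0,1] yields optimal matchings in both games,
yet one of the two allocations has subset instability at least 1/2;
equivalently, one of the two stability indices is at most 1/2. -/
theorem edge_arrival_half_tightness
    (q : ℝ) (hq0 : 0 ≤ q) (hq1 : q ≤ 1)
    (h₁ : Fin 2 → Fin 1 → ℝ) (c₁ : Fin 1 → ℝ)
    (hh₁ : ∀ i j, h₁ i j = 1) (hc₁ : ∀ j, c₁ j = 0)
    (h₂ : Fin 1 → Fin 2 → ℝ) (c₂ : Fin 2 → ℝ)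
    (hh₂ : ∀ i j, h₂ i j = 1) (hc₂ : ∀ j, c₂ j = 0)
    (μ₁ : Matching (Fin 2) (Fin 1))
    (hμ₁ : μ₁.toFun = fun i => if i = 0 then some 0 else none)
    (p₁ : Fin 1 → ℝ) (hp₁ : p₁ = fun _ => q)
    (μ₂ : Matching (Fin 1) (Fin 2))
    (hμ₂ : μ₂.toFun = fun _ => some 0)
    (p₂ : Fin 2 → ℝ) (hp₂ : p₂ = fun j => if j = 0 then q else 0) :
    SW h₁ c₁ μ₁ = OPT h₁ c₁ ∧ SW h₂ c₂ μ₂ = OPT h₂ c₂ ∧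
    (1 : ℝ) / 2 ≤ max (SI h₁ c₁ μ₁ p₁) (SI h₂ c₂ μ₂ p₂) ∧
    min (1 - SI h₁ c₁ μ₁ p₁ / OPT h₁ c₁) (1 - SI h₂ c₂ μ₂ p₂ / OPT h₂ c₂)
      ≤ (1 : ℝ) / 2 :=
  edge_arrival_half_tightness_general q h₁ c₁ hh₁ hc₁ h₂ c₂ hh₂ hc₂ μ₁ hμ₁ p₁ hp₁ μ₂ hμ₂ p₂ hp₂
end
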